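/- (Lifting lemma for JLŁ.) If α₁, …, αₙ ⊢_Ł β (β is derivable from the premises α₁, …, αₙ in Łukasiewicz's proof system), then for any distinct justification variables x₁, …, xₙ there exists a justification term t whose variables are among x₁, …, xₙ such that x₁:α₁, …, xₙ:αₙ ⊢_JLŁ t:β. -/

import Mathlib

/-- Propositional formulas built from countably many atoms with ¬ and →. -/
inductive PropForm : Type
  | atom : ℕ → PropForm
  | neg  : PropForm → PropForm
  | imp  : PropForm → PropForm → PropForm

/-- Łukasiewicz's Hilbert system: axioms L1, L2, L3 and modus ponens;
derivation from a set of premises `Γ`. -/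
inductive LukDeriv : Set PropForm → PropForm → Prop
  | prem {Γ φ} : φ ∈ Γ → LukDeriv Γ φ
  | ax1 {Γ} (φ ψ : PropForm) : LukDeriv Γ (φ.imp (ψ.imp φ))
  | ax2 {Γ} (φ ψ χ : PropForm) :
      LukDeriv Γ ((φ.imp (ψ.imp χ)).imp ((φ.imp ψ).imp (φ.imp χ)))
  | ax3 {Γ} (φ ψ : PropForm) :
      LukDeriv Γ (((φ.neg).imp (ψ.neg)).imp (ψ.imp φ))
  | mp {Γ φ ψ} : LukDeriv Γ (φ.imp ψ) → LukDeriv Γ φ → LukDeriv Γ ψ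

/-- Justification terms: constants, variables, application and sum. -/
inductive JTerm : Type
  | const : ℕ → JTerm
  | var   : ℕ → JTerm
  | app   : JTerm → JTerm → JTerm
  | sum   : JTerm → JTerm → JTerm

/-- Justification formulas: propositional formulas extended with `t : φ`. -/
inductive JForm : Type
  | atom : ℕ → JForm
  | neg  : JForm → JForm
  | imp  : JForm → JForm → JForm
  | just : JTerm → JForm → JForm

/-- Embedding of propositional formulas into justification formulas. -/
def PropForm.toJ : PropForm → JForm
  | .atom n  => .atom n
  | .neg φ   => .neg φ.toJ
  | .imp φ ψ => .imp φ.toJ ψ.toJ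

/-- Schematic constant specification: a distinguished constant for each of the
three Łukasiewicz axiom schemes. -/
def c1 : JTerm := .const 1
def c2 : JTerm := .const 2
def c3 : JTerm := .const 3

/-- The system JLŁ: the Application and Sum axioms, justified Łukasiewicz axioms
(with schematic constant specification `c1, c2, c3`), modus ponens and
application introduction; derivation from a set of premises `Γ`. -/
inductive JLDeriv : Set JForm → JForm → Prop
  | prem {Γ φ} : φ ∈ Γ → JLDeriv Γ φ
  | appAx {Γ} (s t : JTerm) (φ ψ : JForm) :
      JLDeriv Γ ((JForm.just s (φ.imp ψ)).imp
        ((JForm.just t φ).imp (JForm.just (s.app t) ψ)))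
  | sumL {Γ} (s t : JTerm) (ψ : JForm) :
      JLDeriv Γ ((JForm.just s ψ).imp (JForm.just (s.sum t) ψ))
  | sumR {Γ} (s t : JTerm) (ψ : JForm) :
      JLDeriv Γ ((JForm.just t ψ).imp (JForm.just (s.sum t) ψ))
  | jax1 {Γ} (φ ψ : JForm) :
      JLDeriv Γ (JForm.just c1 (φ.imp (ψ.imp φ)))
  | jax2 {Γ} (φ ψ χ : JForm) :
      JLDeriv Γ (JForm.just c2 ((φ.imp (ψ.imp χ)).imp ((φ.imp ψ).imp (φ.imp χ))))
  | jax3 {Γ} (φ ψ : JForm) :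
      JLDeriv Γ (JForm.just c3 (((φ.neg).imp (ψ.neg)).imp (ψ.imp φ)))
  | mp {Γ φ ψ} : JLDeriv Γ (φ.imp ψ) → JLDeriv Γ φ → JLDeriv Γ ψ
  | appIntro {Γ} {s t : JTerm} {φ ψ : JForm} :
      JLDeriv Γ (JForm.just s (φ.imp ψ)) → JLDeriv Γ (JForm.just t φ) →
      JLDeriv Γ (JForm.just (s.app t) ψ)

/-- The set of variables occurring in a justification term. -/
def JTerm.vars : JTerm → Set ℕ
  | .const _ => ∅
  | .var n   => {n}
  | .app s t => s.vars ∪ t.vars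
  | .sum s t => s.vars ∪ t.vars


theorem LukDeriv.lift {Γ : Set PropForm} {Δ : Set JForm} {V : Set ℕ} {β : PropForm}
    (h : LukDeriv Γ β)
    (hΓ : ∀ φ ∈ Γ, ∃ t : JTerm, t.vars ⊆ V ∧ JLDeriv Δ (.just t φ.toJ)) :
    ∃ t : JTerm, t.vars ⊆ V ∧ JLDeriv Δ (.just t β.toJ) := by
  induction h with
  | prem hφ => exact hΓ _ hφ
  | ax1 φ ψ => exact ⟨c1, Set.empty_subset V, .jax1 φ.toJ ψ.toJ⟩
  | ax2 φ ψ χ => exact ⟨c2, Set.empty_subset V, .jax2 φ.toJ ψ.toJ χ.toJ⟩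
  | ax3 φ ψ => exact ⟨c3, Set.empty_subset V, .jax3 φ.toJ ψ.toJ⟩
  | mp _ _ ihImp ihArg =>
    obtain ⟨s, hs, hds⟩ := ihImp
    obtain ⟨t, ht, hdt⟩ := ihArg
    exact ⟨s.app t, Set.union_subset hs ht, .appIntro hds hdt⟩

theorem lifting_general (n : ℕ) (α : Fin n → PropForm) (β : PropForm)
    (h : LukDeriv (Set.range α) β)
    (x : Fin n → ℕ) :
    ∃ t : JTerm, t.vars ⊆ Set.range x ∧
      JLDeriv (Set.range fun i => JForm.just (JTerm.var (x i)) (α i).toJ)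
        (JForm.just t β.toJ) := by
  refine h.lift ?_
  rintro _ ⟨i, rfl⟩
  exact ⟨.var (x i), Set.singleton_subset_iff.2 ⟨i, rfl⟩, .prem ⟨i, rfl⟩⟩

/-- Lifting lemma for JLŁ: if `α₁, …, αₙ ⊢_Ł β`, then for any distinct
justification variables `x₁, …, xₙ` there is a term `t` whose variables are among
`x₁, …, xₙ` such that `x₁:α₁, …, xₙ:αₙ ⊢_JLŁ t:β`. -/
theorem lifting (n : ℕ) (α : Fin n → PropForm) (β : PropForm)
    (h : LukDeriv (Set.range α) β)
    (x : Fin n → ℕ) (hx : Function.Injective x) :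
    ∃ t : JTerm, t.vars ⊆ Set.range x ∧
      JLDeriv (Set.range fun i => JForm.just (JTerm.var (x i)) (α i).toJ)
        (JForm.just t β.toJ) :=
  lifting_general n α β h x
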